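/- arXiv:2410.05846 — 2 statements merged into one kernel-verified Lean document; each statement's English description precedes it below -/
import Mathlib

section
/- Let V be a real vector space of dimension 2n+1, let η be a linear functional on V and ω an alternating bilinear form on V such that η ∧ ωⁿ ≠ 0 (as an alternating (2n+1)-form). Then there exists a unique vector R ∈ V such that ω(R, v) = 0 for all v ∈ V and η(R) = 1. -/
/-! The radical `ker ω` of an alternating form on a space of odd dimension is nonzero, because a
skew-symmetric matrix of odd size has determinant zero. It meets `ker η` only in `0`: a nonzero
`x` in both is killed by `η` and by `ω`, hence by `η ∧ ωⁿ`, and a form of top degree that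
vanishes on a basis through `x` is zero. So `η` is injective on the radical, which therefore
contains exactly one vector `R` with `η R = 1`. -/

noncomputable section WedgeMachinery

variable {V : Type*} [AddCommGroup V] [Module ℝ V]

/-- Wedge product of real-valued alternating forms, via `AlternatingMap.domCoprod`
(the shuffle convention, with no factorial factors). -/
def altWedge {a b : ℕ} (α : V [⋀^Fin a]→ₗ[ℝ] ℝ) (β : V [⋀^Fin b]→ₗ[ℝ] ℝ) :
    V [⋀^Fin (a + b)]→ₗ[ℝ] ℝ :=
  ((LinearMap.mul' ℝ ℝ).compAlternatingMap (α.domCoprod β)).domDomCongr finSumFinEquiv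

/-- `n`-th wedge power of an alternating `2`-form. -/
def altPow (ω : V [⋀^Fin 2]→ₗ[ℝ] ℝ) : (n : ℕ) → V [⋀^Fin (2 * n)]→ₗ[ℝ] ℝ
  | 0 => AlternatingMap.constOfIsEmpty ℝ V (Fin 0) 1
  | n + 1 => altWedge (altPow ω n) ω

/-- A linear functional, regarded as an alternating `1`-form. -/
def alt1 (η : V →ₗ[ℝ] ℝ) : V [⋀^Fin 1]→ₗ[ℝ] ℝ :=
  AlternatingMap.ofSubsingleton ℝ V ℝ 0 η

end WedgeMachinery

theorem existsUnique_mem_apply_eq_one {K V : Type*} [Field K] [AddCommGroup V] [Module K V]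
    {W : Submodule K V} {η : Module.Dual K V} (hW : W ≠ ⊥) (hWη : Disjoint W (LinearMap.ker η)) :
    ∃! R : V, R ∈ W ∧ η R = 1 := by
  have hη : ∀ x ∈ W, η x = 0 → x = 0 := fun x hx hηx => Submodule.disjoint_def.mp hWη x hx hηx
  obtain ⟨x₀, hx₀W, hx₀⟩ := Submodule.exists_mem_ne_zero_of_ne_bot hW
  have hηx₀ : η x₀ ≠ 0 := fun h => hx₀ (hη x₀ hx₀W h)
  refine ⟨(η x₀)⁻¹ • x₀, ⟨W.smul_mem _ hx₀W, by simp [hηx₀]⟩, ?_⟩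
  rintro R ⟨hRW, hR⟩
  exact sub_eq_zero.mp (hη _ (W.sub_mem hRW (W.smul_mem _ hx₀W)) (by simp [hR, hηx₀]))

theorem Module.Basis.exists_fin_apply_eq {K V : Type*} [DivisionRing K] [AddCommGroup V]
    [Module K V] [FiniteDimensional K V] {m : ℕ} (hm : Module.finrank K V = m) {x : V}
    (hx : x ≠ 0) : ∃ (b : Basis (Fin m) K V) (i : Fin m), b i = x := by
  have hli : LinearIndepOn K id {x} := .singleton hx
  let b := Basis.extend hli
  let e := b.indexEquiv (Module.finBasisOfFinrankEq K V hm)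
  refine ⟨b.reindex e, e ⟨x, hli.subset_extend _ rfl⟩, ?_⟩
  simp [b]

section OddDimension

open Matrix

variable {K V : Type*} [Field K] [NeZero (2 : K)] [AddCommGroup V] [Module K V]
  [FiniteDimensional K V]

theorem LinearMap.IsAlt.not_nondegenerate_of_odd_finrank {B : LinearMap.BilinForm K V}
    (hB : LinearMap.IsAlt B) (hV : Odd (Module.finrank K V)) : ¬ B.Nondegenerate := by
  classical
  let b := Module.finBasis K V
  set A := LinearMap.BilinForm.toMatrix b B
  rw [LinearMap.BilinForm.nondegenerate_iff_det_ne_zero b, not_not]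
  have hA : Aᵀ = -A := by
    ext i j
    simpa [A, LinearMap.BilinForm.toMatrix_apply] using (hB.neg (b i) (b j)).symm
  have hdet : A.det = -A.det := by
    conv_lhs => rw [← det_transpose, hA, det_neg, Fintype.card_fin, hV.neg_one_pow, neg_one_mul]
  have h2det : (2 : K) * A.det = 0 := by linear_combination hdet
  exact (mul_eq_zero.mp h2det).resolve_left two_ne_zero

end OddDimension

namespace AlternatingMap

variable {R M N ι : Type*} [CommRing R] [AddCommGroup M] [Module R M] [AddCommGroup N]
  [Module R N]

def toBilin (ω : M [⋀^Fin 2]→ₗ[R] N) : M →ₗ[R] M →ₗ[R] N :=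
  (curryLeftLinearMap.comp ω.curryLeft).compr₂ constLinearEquivOfIsEmpty.symm.toLinearMap

@[simp]
theorem toBilin_apply (ω : M [⋀^Fin 2]→ₗ[R] N) (x y : M) : ω.toBilin x y = ω ![x, y] := by
  simp [toBilin]

theorem toBilin_isAlt (ω : M [⋀^Fin 2]→ₗ[R] N) : ω.toBilin.IsAlt := fun x => by
  rw [toBilin_apply]
  exact ω.map_eq_zero_of_eq ![x, x] (i := 0) (j := 1) rfl (by decide)

def Kills (x : M) (γ : M [⋀^ι]→ₗ[R] N) : Prop :=
  ∀ (v : ι → M) (i : ι), v i = x → γ v = 0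

theorem Kills.eq_zero {K V : Type*} [Field K] [AddCommGroup V] [Module K V]
    [FiniteDimensional K V] {m : ℕ} (hm : Module.finrank K V = m) {x : V} (hx : x ≠ 0)
    {γ : V [⋀^Fin m]→ₗ[K] K} (hγ : Kills x γ) : γ = 0 := by
  obtain ⟨b, i, hbi⟩ := Module.Basis.exists_fin_apply_eq hm hx
  exact (γ.map_basis_eq_zero_iff b).mp (hγ b i hbi)

theorem kills_of_toBilin_eq_zero {ω : M [⋀^Fin 2]→ₗ[R] N} {x : M} (hx : ω.toBilin x = 0) :
    Kills x ω := by
  intro v i hv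
  have hv' : v = ![v 0, v 1] := by ext j; fin_cases j <;> rfl
  rw [hv', ← toBilin_apply]
  fin_cases i <;> simp only [Fin.zero_eta, Fin.mk_one] at hv <;> rw [hv]
  · rw [hx, LinearMap.zero_apply]
  · rw [← LinearMap.IsAlt.neg ω.toBilin_isAlt, hx, LinearMap.zero_apply, neg_zero]

end AlternatingMap

open AlternatingMap

section Wedge

variable {V : Type*} [AddCommGroup V] [Module ℝ V]

theorem kills_alt1 {η : V →ₗ[ℝ] ℝ} {x : V} (hx : η x = 0) : Kills x (alt1 η) := by
  intro v i hv
  obtain rfl := Subsingleton.elim i 0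
  simpa [alt1, hv] using hx

theorem kills_altWedge {x : V} {a b : ℕ} {α : V [⋀^Fin a]→ₗ[ℝ] ℝ} {β : V [⋀^Fin b]→ₗ[ℝ] ℝ}
    (hα : Kills x α) (hβ : Kills x β) : Kills x (altWedge α β) := by
  intro v i hv
  rw [altWedge, domDomCongr_apply, LinearMap.compAlternatingMap_apply, domCoprod_apply,
    sum_apply, map_sum]
  refine Finset.sum_eq_zero fun σ _ => ?_
  induction σ using Quotient.inductionOn' with
  | h σ =>
    -- each shuffle term feeds `x` either to `α` or to `β`
    have hσ : v (finSumFinEquiv (σ (σ⁻¹ (finSumFinEquiv.symm i)))) = x := by simp [hv]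
    generalize σ⁻¹ (finSumFinEquiv.symm i) = k at hσ
    rw [domCoprod.summand_mk'', _root_.smul_apply, MultilinearMap.domDomCongr_apply,
      MultilinearMap.domCoprod_apply]
    rcases k with k | k
    · simp [hα (fun k => v (finSumFinEquiv (σ (.inl k)))) k hσ]
    · simp [hβ (fun k => v (finSumFinEquiv (σ (.inr k)))) k hσ]

theorem kills_altPow {ω : V [⋀^Fin 2]→ₗ[ℝ] ℝ} {x : V} (hx : Kills x ω) (n : ℕ) :
    Kills x (altPow ω n) := by
  induction n with
  | zero => exact fun _ i _ => i.elim0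
  | succ n ih => exact kills_altWedge ih hx

end Wedge

/-- Let `V` be a real vector space of dimension `2n+1`, `η` a linear
functional and `ω` an alternating bilinear form on `V` with `η ∧ ωⁿ ≠ 0`.  Then there is a
unique vector `R ∈ V` (the Reeb vector) with `ω (R, v) = 0` for all `v` and `η R = 1`. -/
theorem reeb_vector_exists_unique {V : Type*} [AddCommGroup V] [Module ℝ V]
    [FiniteDimensional ℝ V] {n : ℕ} (hdim : Module.finrank ℝ V = 2 * n + 1)
    (η : Module.Dual ℝ V) (ω : V [⋀^Fin 2]→ₗ[ℝ] ℝ)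
    (hnd : altWedge (alt1 η) (altPow ω n) ≠ 0) :
    ∃! R : V, (∀ v : V, ω ![R, v] = 0) ∧ η R = 1 := by
  have hker : ∀ x, x ∈ LinearMap.ker ω.toBilin ↔ ∀ v, ω ![x, v] = 0 := by
    simp [LinearMap.ext_iff]
  have hdeg : LinearMap.ker ω.toBilin ≠ ⊥ := by
    rw [Ne, ← LinearMap.BilinForm.nondegenerate_iff_ker_eq_bot]
    exact ω.toBilin_isAlt.not_nondegenerate_of_odd_finrank (hdim ▸ odd_two_mul_add_one n)
  have hdisj : Disjoint (LinearMap.ker ω.toBilin) (LinearMap.ker η) := by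
    refine Submodule.disjoint_def.mpr fun x hxω hxη => by_contra fun hx => hnd ?_
    exact Kills.eq_zero (by omega) hx
      (kills_altWedge (kills_alt1 hxη) (kills_altPow (kills_of_toBilin_eq_zero hxω) n))
  simpa only [hker] using existsUnique_mem_apply_eq_one hdeg hdisj
end

section
/- Let V be a real vector space of dimension 2n+1, let η be a linear functional on V and ω an alternating bilinear form on V such that η ∧ ωⁿ ≠ 0 (as an alternating (2n+1)-form). Then the linear map ♭ : V → V* defined by ♭(X) = ω(X, ·) + η(X)·η is a linear isomorphism. -/
namespace AlternatingMap

section Kernel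

variable {R M N : Type*} [CommSemiring R] [AddCommMonoid M] [Module R M]
  [AddCommMonoid N] [Module R N] {ι : Type*}

/-- The vectors `x` with `ι_x f = 0`. -/
def kernel (f : M [⋀^ι]→ₗ[R] N) : Set M :=
  {x | ∀ v : ι → M, x ∈ Set.range v → f v = 0}

theorem mem_kernel_compAlternatingMap {N' : Type*} [AddCommMonoid N'] [Module R N']
    (g : N →ₗ[R] N') {f : M [⋀^ι]→ₗ[R] N} {x : M} (hx : x ∈ f.kernel) :
    x ∈ (g.compAlternatingMap f).kernel := fun v hv => by
  rw [LinearMap.compAlternatingMap_apply, hx v hv, g.map_zero]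

theorem mem_kernel_domDomCongr {ι' : Type*} (σ : ι ≃ ι') {f : M [⋀^ι]→ₗ[R] N} {x : M}
    (hx : x ∈ f.kernel) : x ∈ (f.domDomCongr σ).kernel := fun v ⟨i, hi⟩ =>
  hx _ ⟨σ.symm i, by simpa using hi⟩

theorem mem_kernel_ofSubsingleton [Subsingleton ι] (i : ι) {g : M →ₗ[R] N} {x : M}
    (hx : g x = 0) : x ∈ (ofSubsingleton R M N i g).kernel := by
  rintro v ⟨j, rfl⟩
  simpa [Subsingleton.elim i j] using hx

theorem mem_kernel_of_fin_two {G : Type*} [AddCommGroup G] [Module R G]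
    {f : M [⋀^Fin 2]→ₗ[R] G} {x : M} (hx : ∀ y, f ![x, y] = 0) : x ∈ f.kernel := by
  rintro v ⟨i, rfl⟩
  suffices h : ∀ w : Fin 2 → M, w 0 = v i → f w = 0 by
    fin_cases i
    · exact h v rfl
    · rw [← neg_eq_zero, ← f.map_swap v zero_ne_one]
      exact h _ rfl
  intro w hw
  rw [show w = ![v i, w 1] by ext j; fin_cases j <;> simp [hw]]
  exact hx _

theorem mem_kernel_domCoprod {N₁ N₂ : Type*} [AddCommGroup N₁] [Module R N₁]
    [AddCommGroup N₂] [Module R N₂]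
    {ιa ιb : Type*} [Fintype ιa] [Fintype ιb] [DecidableEq ιa] [DecidableEq ιb]
    {a : M [⋀^ιa]→ₗ[R] N₁} {b : M [⋀^ιb]→ₗ[R] N₂} {x : M}
    (ha : x ∈ a.kernel) (hb : x ∈ b.kernel) : x ∈ (a.domCoprod b).kernel := by
  rintro v ⟨j, rfl⟩
  rw [domCoprod_apply, _root_.sum_apply]
  refine Finset.sum_eq_zero fun σ _ => ?_
  induction σ using Quotient.inductionOn' with
  | h σ =>
    rw [domCoprod.summand_mk'', _root_.smul_apply, MultilinearMap.domDomCongr_apply,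
      MultilinearMap.domCoprod_apply, coe_multilinearMap, coe_multilinearMap]
    -- `v j` is an argument of the left factor or of the right one, according to `σ⁻¹ j`.
    rcases hj : σ⁻¹ j with i | i
    · rw [ha _ ⟨i, by simp [← hj]⟩, TensorProduct.zero_tmul, smul_zero]
    · rw [hb _ ⟨i, by simp [← hj]⟩, TensorProduct.tmul_zero, smul_zero]

end Kernel

theorem eq_zero_of_mem_kernel {K M N ι : Type*} [Field K] [AddCommGroup M] [Module K M]
    [FiniteDimensional K M] [AddCommMonoid N] [Module K N] [Finite ι]
    (hdim : Module.finrank K M = Nat.card ι) {f : M [⋀^ι]→ₗ[K] N} {x : M} (hx0 : x ≠ 0)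
    (hx : x ∈ f.kernel) : f = 0 := by
  have hli : LinearIndepOn K id ({x} : Set M) := (linearIndepOn_singleton_iff K).mpr hx0
  let b := Module.Basis.extend hli
  refine b.ext_alternating fun v hv => ?_
  have hbij : v.Bijective := hv.bijective_of_nat_card_le <| by
    rw [← hdim, Module.finrank_eq_nat_card_basis b]
  obtain ⟨i, hi⟩ := hbij.surjective ⟨x, hli.subset_extend _ rfl⟩
  exact hx _ ⟨i, by simp [b, hi]⟩

end AlternatingMap

open AlternatingMap

section Flat

variable {R M : Type*} [CommSemiring R] [AddCommMonoid M] [Module R M]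

def flat (η : Module.Dual R M) (ω : M [⋀^Fin 2]→ₗ[R] R) : M →ₗ[R] Module.Dual R M :=
  LinearMap.mk₂ R (fun X v => ω.curryLeft X ![v] + η X * η v)
    (fun X Y v => by simp only [map_add, AlternatingMap.add_apply]; ring)
    (fun c X v => by simp only [map_smul, AlternatingMap.smul_apply, smul_eq_mul]; ring)
    (fun X v w => by simp only [map_vecCons_add, map_add]; ring)
    (fun c X v => by simp only [map_vecCons_smul, map_smul, smul_eq_mul]; ring)

theorem flat_apply (η : Module.Dual R M) (ω : M [⋀^Fin 2]→ₗ[R] R) (X v : M) :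
    flat η ω X v = ω ![X, v] + η X * η v :=
  rfl

end Flat

theorem mem_kernel_of_flat_eq_zero {R M : Type*} [CommRing R] [NoZeroDivisors R]
    [AddCommMonoid M] [Module R M] {η : Module.Dual R M} {ω : M [⋀^Fin 2]→ₗ[R] R} {X : M}
    (hX : flat η ω X = 0) : η X = 0 ∧ X ∈ ω.kernel := by
  have hflat (v : M) : ω ![X, v] + η X * η v = 0 := LinearMap.congr_fun hX v
  have hη : η X = 0 := by
    simpa [ω.map_eq_zero_of_eq ![X, X] (i := 0) (j := 1) rfl zero_ne_one] using hflat X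
  exact ⟨hη, mem_kernel_of_fin_two fun v => by simpa [hη] using hflat v⟩

section Forms

variable {V : Type*} [AddCommGroup V] [Module ℝ V]

theorem mem_kernel_altWedge {a b : ℕ} {α : V [⋀^Fin a]→ₗ[ℝ] ℝ} {β : V [⋀^Fin b]→ₗ[ℝ] ℝ}
    {x : V} (hα : x ∈ α.kernel) (hβ : x ∈ β.kernel) : x ∈ (altWedge α β).kernel :=
  mem_kernel_domDomCongr _ (mem_kernel_compAlternatingMap _ (mem_kernel_domCoprod hα hβ))

theorem mem_kernel_altPow {ω : V [⋀^Fin 2]→ₗ[ℝ] ℝ} {x : V} (hx : x ∈ ω.kernel) :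
    ∀ n, x ∈ (altPow ω n).kernel
  | 0 => fun _ ⟨i, _⟩ => i.elim0
  | n + 1 => mem_kernel_altWedge (mem_kernel_altPow hx n) hx

theorem flat_injective [FiniteDimensional ℝ V] {n : ℕ} (hdim : Module.finrank ℝ V = 2 * n + 1)
    {η : Module.Dual ℝ V} {ω : V [⋀^Fin 2]→ₗ[ℝ] ℝ}
    (hnd : altWedge (alt1 η) (altPow ω n) ≠ 0) : Function.Injective (flat η ω) := by
  rw [← LinearMap.ker_eq_bot, LinearMap.ker_eq_bot']
  intro X hX
  by_contra hX0
  obtain ⟨hη, hω⟩ := mem_kernel_of_flat_eq_zero hX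
  refine hnd (eq_zero_of_mem_kernel ?_ hX0
    (mem_kernel_altWedge (mem_kernel_ofSubsingleton 0 hη) (mem_kernel_altPow hω n)))
  rw [hdim, Nat.card_fin, add_comm]

end Forms

/-- If `η ∧ ωⁿ ≠ 0` on a `(2n+1)`-dimensional real vector space `V`, then
the musical map `♭ : V → V*`, `♭(X) = ω(X, ·) + η(X)·η`, is a linear isomorphism. -/
theorem flat_linear_isomorphism {V : Type*} [AddCommGroup V] [Module ℝ V]
    [FiniteDimensional ℝ V] {n : ℕ} (hdim : Module.finrank ℝ V = 2 * n + 1)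
    (η : Module.Dual ℝ V) (ω : V [⋀^Fin 2]→ₗ[ℝ] ℝ)
    (hnd : altWedge (alt1 η) (altPow ω n) ≠ 0) :
    ∃ e : V ≃ₗ[ℝ] Module.Dual ℝ V, ∀ X v : V, e X v = ω ![X, v] + η X * η v :=
  ⟨(flat η ω).linearEquivOfInjective (flat_injective hdim hnd) Subspace.dual_finrank_eq.symm,
    flat_apply η ω⟩
end
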